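/- Let K be a field of characteristic zero and consider the K-vector space L = K[x, x⁻¹] of Laurent polynomials, equipped with the operators X (multiplication by x) and D (formal differentiation d/dx). Then the smallest K-subspace of L containing x⁻¹ and closed under X and D is all of L. -/

import Mathlib

open LaurentPolynomial

/-- Formal differentiation `d/dx` on Laurent polynomials, sending `x^n` to `n·x^{n-1}`. -/
noncomputable def laurentDeriv {K : Type} [Field K] (p : LaurentPolynomial K) :
    LaurentPolynomial K :=
  Finsupp.sum p.coeff fun n a => ((n : K) * a) • LaurentPolynomial.T (n - 1)

/-! Upwards, multiplication by `x` reaches every `x^n` with `n ≥ -1`; downwards, differentiation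
reaches every `x^n` with `n ≤ -1`, because the factor `n` it introduces is a unit in characteristic
zero as long as `n ≠ 0`. The monomials span `K[x, x⁻¹]`. -/

theorem laurentDeriv_T {K : Type} [Field K] (n : ℤ) :
    laurentDeriv (T n : K[T;T⁻¹]) = (n : K) • T (n - 1) := by
  rw [laurentDeriv, T, AddMonoidAlgebra.coeff_single, Finsupp.sum_single_index] <;> simp

theorem LaurentPolynomial.submodule_eq_top_of_forall_T_mem {R : Type*} [CommSemiring R]
    (V : Submodule R R[T;T⁻¹]) (hT : ∀ n, T n ∈ V) : V = ⊤ := by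
  refine Submodule.eq_top_iff'.mpr fun p => p.induction_on' (fun _ _ => V.add_mem) ?_
  intro n a
  rw [← smul_eq_C_mul]
  exact V.smul_mem a (hT n)

section ClosedSubmodule

variable {K : Type} [Field K] {V : Submodule K K[T;T⁻¹]} {n : ℤ}

theorem T_add_one_mem_of_T_one_mul_mem (hX : ∀ p ∈ V, T 1 * p ∈ V) (h : T n ∈ V) :
    T (n + 1) ∈ V := by
  rw [add_comm, T_add]
  exact hX _ h

theorem T_sub_one_mem_of_laurentDeriv_mem [CharZero K] (hD : ∀ p ∈ V, laurentDeriv p ∈ V)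
    (hn : n ≠ 0) (h : T n ∈ V) : T (n - 1) ∈ V := by
  have hD' := hD _ h
  rwa [laurentDeriv_T, Submodule.smul_mem_iff V (Int.cast_ne_zero.mpr hn)] at hD'

end ClosedSubmodule

/-- the smallest `K`-subspace of `K[x,x⁻¹]` containing `x⁻¹` and closed
under multiplication by `x` and under `d/dx` is everything. -/
theorem span_inv_x_closed_under_X_D_eq_top {K : Type} [Field K] [CharZero K]
    (V : Submodule K (LaurentPolynomial K))
    (hmem : LaurentPolynomial.T (-1) ∈ V)
    (hX : ∀ p ∈ V, LaurentPolynomial.T 1 * p ∈ V)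
    (hD : ∀ p ∈ V, laurentDeriv p ∈ V) :
    V = ⊤ := by
  refine submodule_eq_top_of_forall_T_mem V fun n => ?_
  rcases le_total (-1) n with hn | hn
  · induction n, hn using Int.leInduction with
    | base => exact hmem
    | succ n _ ih => exact T_add_one_mem_of_T_one_mul_mem hX ih
  · induction n, hn using Int.leInductionDown with
    | base => exact hmem
    | pred n hn ih => exact T_sub_one_mem_of_laurentDeriv_mem hD (by omega) ih
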